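/- Let U1, U2, U3, U4 be pairwise transverse n-dimensional subspaces of a real vector space V of dimension 2n, let T = Refl(U1,U2) ∘ Refl(U3,U4), and let C = [U1,U2;U3,U4] ∈ End(U1). Suppose that for some integer N ≥ 2 one has T^N = id_V or T^N = −id_V (i.e., T has finite order N in PGL(2n,ℝ)). Then every complex root μ of the characteristic polynomial of C is of the form μ = sin²(kπ/(2N)) for some integer k; in particular every eigenvalue of C is real and lies in the interval [0,1]. -/

import Mathlib

/-!
Write `R₁, R₂` for the two reflections and `T = R₁ R₂`; since `R₁² = R₂² = 1`, `T⁻¹ = R₂ R₁`.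
On `U₁` one computes `T + T⁻¹ = 4 C - 2`, so a (complex) eigenvector `x` of `C` with eigenvalue
`μ` gives a nonzero `v` with `T v + T⁻¹ v = (4μ - 2) v`, i.e. `(T² - (4μ - 2) T + 1) v = 0`.
As also `(T^{2N} - 1) v = 0`, the two polynomials share a root `λ`: a `2N`-th root of unity
`e^{iθ}` with `λ + λ⁻¹ = 4μ - 2`. Hence `μ = (1 + cos θ) / 2 = sin² (θ / 2 + π / 2)`.
-/

open Module Submodule

variable {V : Type*} [AddCommGroup V] [Module ℝ V]

/-- The projection onto `U` with kernel `W`, as an endomorphism of `V`. -/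
noncomputable def projTo (U W : Submodule ℝ V) (h : IsCompl U W) : V →ₗ[ℝ] V :=
  U.subtype ∘ₗ U.linearProjOfIsCompl W h

/-- The reflection in the pair `(U, W)`: `π_U^W - π_W^U`. -/
noncomputable def reflPair (U W : Submodule ℝ V) (h : IsCompl U W) : V →ₗ[ℝ] V :=
  projTo U W h - projTo W U h.symm

/-- The generalized cross-ratio `[U1,U2;U3,U4]`: the restriction of
`π_{U1}^{U2} ∘ π_{U3}^{U4}` to `U1`, as an endomorphism of `U1`. -/
noncomputable def crossRatio (U1 U2 U3 U4 : Submodule ℝ V)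
    (h12 : IsCompl U1 U2) (h34 : IsCompl U3 U4) : U1 →ₗ[ℝ] U1 :=
  (U1.linearProjOfIsCompl U2 h12) ∘ₗ (projTo U3 U4 h34) ∘ₗ U1.subtype

open Polynomial TensorProduct

lemma projTo_eq_projection (U W : Submodule ℝ V) (h : IsCompl U W) :
    projTo U W h = U.projection W h := rfl

lemma reflPair_apply (U W : Submodule ℝ V) (h : IsCompl U W) (x : V) :
    reflPair U W h x = (2 : ℝ) • U.projection W h x - x := by
  rw [reflPair, LinearMap.sub_apply, projTo_eq_projection, projTo_eq_projection,
    projection_eq_self_sub_projection h]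
  module

lemma reflPair_apply_of_mem (U W : Submodule ℝ V) (h : IsCompl U W) {x : V} (hx : x ∈ U) :
    reflPair U W h x = x := by
  rw [reflPair_apply, projection_apply_of_mem_left h hx]
  module

lemma reflPair_comp_self (U W : Submodule ℝ V) (h : IsCompl U W) :
    reflPair U W h ∘ₗ reflPair U W h = LinearMap.id := by
  ext x
  rw [LinearMap.comp_apply, LinearMap.id_apply, reflPair_apply U W h (reflPair U W h x),
    reflPair_apply U W h x, map_sub, map_smul,
    projection_apply_of_mem_left h (projection_apply_mem h x)]
  module

lemma coe_crossRatio_apply (U1 U2 U3 U4 : Submodule ℝ V) (h12 : IsCompl U1 U2)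
    (h34 : IsCompl U3 U4) (u : U1) :
    (crossRatio U1 U2 U3 U4 h12 h34 u : V) = U1.projection U2 h12 (U3.projection U4 h34 u) :=
  rfl

lemma reflPair_comp_add_comp_subtype (U1 U2 U3 U4 : Submodule ℝ V)
    (h12 : IsCompl U1 U2) (h34 : IsCompl U3 U4) :
    (reflPair U1 U2 h12 ∘ₗ reflPair U3 U4 h34 + reflPair U3 U4 h34 ∘ₗ reflPair U1 U2 h12)
      ∘ₗ U1.subtype
      = U1.subtype ∘ₗ ((4 : ℝ) • crossRatio U1 U2 U3 U4 h12 h34 - (2 : ℝ) • LinearMap.id) := by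
  -- `R₁` fixes `u ∈ U₁`, so the left side is `(R₁ + 1) (R₂ u) = 2 π₁ (2 π₃ u - u)`.
  ext u
  simp only [LinearMap.comp_apply, LinearMap.add_apply, subtype_apply,
    reflPair_apply_of_mem U1 U2 h12 u.2, LinearMap.sub_apply, LinearMap.smul_apply,
    LinearMap.id_apply, Submodule.coe_sub, Submodule.coe_smul, coe_crossRatio_apply]
  rw [reflPair_apply U1 U2 h12, reflPair_apply U3 U4 h34, map_sub, map_smul,
    projection_apply_of_mem_left h12 u.2]
  module

section
variable {K E : Type*} [Field K] [IsAlgClosed K] [AddCommGroup E] [Module K E]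

lemma Module.End.exists_isRoot_isRoot_of_aeval_apply_eq_zero (T : Module.End K E) {p q : K[X]}
    {v : E} (hv : v ≠ 0) (hp : aeval T p v = 0) (hq : aeval T q v = 0) :
    ∃ z, p.IsRoot z ∧ q.IsRoot z := by
  by_contra! h
  obtain ⟨a, b, hab⟩ := (isCoprime_iff_aeval_ne_zero_of_isAlgClosed K K p q).2 fun z => by
    simpa only [coe_aeval_eq_eval, ← imp_iff_not_or, IsRoot.def] using h z
  refine hv (Eq.symm ?_)
  simpa [Module.End.mul_apply, hp, hq] using LinearMap.congr_fun (congrArg (aeval T) hab) v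

lemma Module.End.exists_pow_eq_one_of_apply_add_apply_eq_smul {T R : Module.End K E}
    (hTR : T * R = 1) {m : ℕ} (hm : T ^ m = 1) {v : E} (hv : v ≠ 0) {s : K}
    (hs : T v + R v = s • v) : ∃ z : K, z ^ m = 1 ∧ z ^ 2 - s * z + 1 = 0 := by
  have hTR_v : T (R v) = v := by rw [← Module.End.mul_apply, hTR, Module.End.one_apply]
  have hp : aeval T (X ^ 2 - C s * X + 1) v = 0 :=
    calc aeval T (X ^ 2 - C s * X + 1) v = T (T v + R v - s • v) := by
          simp only [pow_two, map_add, map_mul, aeval_X, aeval_C, map_one,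
            LinearMap.add_apply, LinearMap.sub_apply, Module.End.mul_apply,
            Module.algebraMap_end_apply, Module.End.one_apply, map_sub, hTR_v, map_smul]
          abel
      _ = 0 := by rw [hs, sub_self, map_zero]
  have hq : aeval T (X ^ m - 1 : K[X]) v = 0 := by simp [hm]
  obtain ⟨z, hzp, hzq⟩ := T.exists_isRoot_isRoot_of_aeval_apply_eq_zero hv hp hq
  exact ⟨z, by simpa [sub_eq_zero] using hzq, by simpa using hzp⟩

end

open Complex in
lemma exists_sin_sq_eq_of_pow_eq_one {N : ℕ} (hN : N ≠ 0) {z μ : ℂ} (hz : z ^ (2 * N) = 1)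
    (h : z ^ 2 - (4 * μ - 2) * z + 1 = 0) :
    ∃ k : ℤ, μ = (Real.sin (k * Real.pi / (2 * N)) ^ 2 : ℝ) := by
  have : NeZero (2 * N) := ⟨by omega⟩
  obtain ⟨i, -, rfl⟩ := (isPrimitiveRoot_exp (2 * N) (by omega)).eq_pow_of_pow_eq_one hz
  set θ : ℝ := i * Real.pi / N
  have hexp : exp (2 * Real.pi * I / (2 * N : ℕ)) ^ i = exp (θ * I) := by
    rw [← exp_nat_mul]
    congr 1
    push_cast [θ]
    field_simp
  have hμ : 4 * μ - 2 = 2 * cos θ := by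
    rw [hexp] at h
    rw [two_cos]
    have hinv : exp (θ * I) * exp (-θ * I) = 1 := by rw [← exp_add]; simp
    have hne := exp_ne_zero (θ * I)
    apply mul_left_cancel₀ hne
    linear_combination -h - hinv
  refine ⟨i + N, ?_⟩
  have hk : ((i + N : ℤ) : ℝ) * Real.pi / (2 * N) = θ / 2 + Real.pi / 2 := by
    push_cast [θ]
    field_simp
  rw [hk, Real.sin_add_pi_div_two, Real.cos_sq, mul_div_cancel₀ θ two_ne_zero]
  push_cast
  linear_combination hμ / 4

lemma exists_baseChange_apply_eq_smul_of_comp_subtype {E : Type*} [AddCommGroup E]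
    [Module ℝ E] {U : Submodule ℝ E} [FiniteDimensional ℝ U] {S : Module.End ℝ E}
    {D : Module.End ℝ U} {a b : ℝ} (hS : S ∘ₗ U.subtype = U.subtype ∘ₗ (a • D - b • LinearMap.id))
    {μ : ℂ} (hμ : (D.charpoly.map (algebraMap ℝ ℂ)).IsRoot μ) :
    ∃ v : ℂ ⊗[ℝ] E, v ≠ 0 ∧ S.baseChange ℂ v = (a * μ - b) • v := by
  have hD : Module.End.HasEigenvalue (D.baseChange ℂ) μ := by
    rwa [Module.End.hasEigenvalue_iff_isRoot_charpoly, LinearMap.charpoly_baseChange]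
  obtain ⟨x, hx⟩ := hD.exists_hasEigenvector
  have hinj : Function.Injective (U.subtype.baseChange ℂ) := by
    rw [LinearMap.baseChange_eq_ltensor]
    exact Module.Flat.lTensor_preserves_injective_linearMap _ U.injective_subtype
  refine ⟨U.subtype.baseChange ℂ x, (map_ne_zero_iff _ hinj).2 hx.2, ?_⟩
  have := LinearMap.congr_fun (congrArg (LinearMap.baseChange ℂ) hS) x
  simp only [LinearMap.baseChange_comp, LinearMap.baseChange_sub, LinearMap.baseChange_smul,
    LinearMap.baseChange_id, LinearMap.comp_apply, LinearMap.sub_apply, LinearMap.smul_apply,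
    LinearMap.id_apply, hx.apply_eq_smul] at this
  rw [this, ← algebraMap_smul ℂ a, ← algebraMap_smul ℂ b, smul_smul, ← sub_smul, map_smul,
    Complex.coe_algebraMap]

theorem stmt6_general {V : Type*} [AddCommGroup V] [Module ℝ V] [FiniteDimensional ℝ V]
    (U1 U2 U3 U4 : Submodule ℝ V)
    (h12 : IsCompl U1 U2) (h34 : IsCompl U3 U4)
    (N : ℕ) (hN : 2 ≤ N)
    (hT : (reflPair U1 U2 h12 ∘ₗ reflPair U3 U4 h34) ^ N = (LinearMap.id : V →ₗ[ℝ] V) ∨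
          (reflPair U1 U2 h12 ∘ₗ reflPair U3 U4 h34) ^ N = -(LinearMap.id : V →ₗ[ℝ] V)) :
    (∀ μ : ℂ, ((crossRatio U1 U2 U3 U4 h12 h34).charpoly.map (algebraMap ℝ ℂ)).IsRoot μ →
        ∃ k : ℤ, μ = (Real.sin (k * Real.pi / (2 * N)) ^ 2 : ℝ)) ∧
    (∀ μ : ℝ, Module.End.HasEigenvalue (crossRatio U1 U2 U3 U4 h12 h34) μ →
        0 ≤ μ ∧ μ ≤ 1) := by
  set R1 := reflPair U1 U2 h12
  set R2 := reflPair U3 U4 h34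
  have hinv : (R1 ∘ₗ R2) * (R2 ∘ₗ R1) = 1 := by
    rw [Module.End.mul_eq_comp, LinearMap.comp_assoc, ← LinearMap.comp_assoc R1,
      reflPair_comp_self, LinearMap.id_comp, reflPair_comp_self, Module.End.one_eq_id]
  have hpow : (R1 ∘ₗ R2) ^ (2 * N) = 1 := by
    rw [mul_comm, pow_mul]
    rcases hT with h | h <;> simp [h, Module.End.one_eq_id]
  have roots (μ : ℂ)
      (hμ : ((crossRatio U1 U2 U3 U4 h12 h34).charpoly.map (algebraMap ℝ ℂ)).IsRoot μ) :
      ∃ k : ℤ, μ = (Real.sin (k * Real.pi / (2 * N)) ^ 2 : ℝ) := by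
    obtain ⟨v, hv, hSv⟩ := exists_baseChange_apply_eq_smul_of_comp_subtype
      (reflPair_comp_add_comp_subtype U1 U2 U3 U4 h12 h34) hμ
    obtain ⟨z, hz, hzμ⟩ := Module.End.exists_pow_eq_one_of_apply_add_apply_eq_smul
      (by rw [← LinearMap.baseChange_mul, hinv, LinearMap.baseChange_one])
      (by rw [← LinearMap.baseChange_pow, hpow, LinearMap.baseChange_one]) hv
      (by simpa only [LinearMap.baseChange_add, LinearMap.add_apply] using hSv)
    exact exists_sin_sq_eq_of_pow_eq_one (by omega) hz (by exact_mod_cast hzμ)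
  refine ⟨roots, fun μ hμ => ?_⟩
  obtain ⟨k, hk⟩ := roots μ ((Module.End.hasEigenvalue_iff_isRoot_charpoly _ μ).1 hμ).map
  rw [Complex.ofReal_inj] at hk
  exact hk ▸ ⟨sq_nonneg _, Real.sin_sq_le_one _⟩

theorem stmt6 {V : Type*} [AddCommGroup V] [Module ℝ V] [FiniteDimensional ℝ V]
    (n : ℕ) (hV : finrank ℝ V = 2 * n)
    (U1 U2 U3 U4 : Submodule ℝ V)
    (hd1 : finrank ℝ U1 = n) (hd2 : finrank ℝ U2 = n)
    (hd3 : finrank ℝ U3 = n) (hd4 : finrank ℝ U4 = n)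
    (h12 : IsCompl U1 U2) (h13 : IsCompl U1 U3) (h14 : IsCompl U1 U4)
    (h23 : IsCompl U2 U3) (h24 : IsCompl U2 U4) (h34 : IsCompl U3 U4)
    (N : ℕ) (hN : 2 ≤ N)
    (hT : (reflPair U1 U2 h12 ∘ₗ reflPair U3 U4 h34) ^ N = (LinearMap.id : V →ₗ[ℝ] V) ∨
          (reflPair U1 U2 h12 ∘ₗ reflPair U3 U4 h34) ^ N = -(LinearMap.id : V →ₗ[ℝ] V)) :
    (∀ μ : ℂ, ((crossRatio U1 U2 U3 U4 h12 h34).charpoly.map (algebraMap ℝ ℂ)).IsRoot μ →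
        ∃ k : ℤ, μ = (Real.sin (k * Real.pi / (2 * N)) ^ 2 : ℝ)) ∧
    (∀ μ : ℝ, Module.End.HasEigenvalue (crossRatio U1 U2 U3 U4 h12 h34) μ →
        0 ≤ μ ∧ μ ≤ 1) :=
  stmt6_general U1 U2 U3 U4 h12 h34 N hN hT
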